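/- Let G be a graph with a simplicial vertex x_1 whose closed neighborhood is N_G[x_1] = {x_1, x_2, ..., x_d} for some d ≥ 2. Then for every integer k ≥ 1, the ideal quotient (I(G)^{{k}} : x_1 x_2 ⋯ x_d) equals I(G ∖ N_G[x_1])^{{k − d + 1}}, where I(H)^{{j}} denotes the j-th squarefree symbolic power (with the convention I(H)^{{j}} = R for j ≤ 0). -/

import Mathlib

/-!
Write `x_A = ∏ x ∈ A, X x`. The ideal `sqfSymbPow K G k` is generated by the `x_A` with `A` meeting
every minimal vertex cover of `G` in at least `k` vertices, and the colon of a squarefree monomial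
ideal by `x_s` is generated by the `x_(A \ s)`. So the theorem is a statement about these sets `A`.

As `s = N[x₁]` is a clique, every vertex cover of `G` contains all of `s` but at most one vertex,
so `s` itself qualifies when `k < d` and the colon is the unit ideal. Otherwise, a minimal cover
`C'` of `G ∖ s` is disjoint from `s`, and `C' ∪ (s \ {x₁})` covers `G`; so if `A` qualifies for
`G` then `A \ s` meets `C'` in at least `k - (d - 1)` vertices. Conversely, a minimal cover `C` of
`G` restricts to the cover `C \ s` of `G ∖ s` and meets `s` in at least `d - 1` vertices; so if
`B` qualifies for `G ∖ s` with `k - d + 1`, then `B ∪ s` qualifies for `G` with `k`.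
-/

open MvPolynomial

variable {V : Type*} [Fintype V] [DecidableEq V] {K : Type*} [Field K]

/-- `C` is a vertex cover of the simple graph `G`. -/
def IsVertexCover (G : SimpleGraph V) (C : Finset V) : Prop :=
  ∀ ⦃u v : V⦄, G.Adj u v → u ∈ C ∨ v ∈ C

/-- `C` is a minimal vertex cover of `G`. -/
def IsMinVertexCover (G : SimpleGraph V) (C : Finset V) : Prop :=
  IsVertexCover G C ∧ ∀ D : Finset V, IsVertexCover G D → D ⊆ C → D = C

/-- The `k`-th squarefree symbolic power of the edge ideal of `G`. -/
noncomputable def sqfSymbPow (K : Type*) [Field K] (G : SimpleGraph V) (k : ℕ) :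
    Ideal (MvPolynomial V K) :=
  Ideal.span {m | ∃ A : Finset V, m = ∏ x ∈ A, X x ∧
    ∀ C : Finset V, IsMinVertexCover G C → k ≤ (A ∩ C).card}

/-- The `j`-th squarefree symbolic power with the convention that it is the whole ring
for `j ≤ 0`. -/
noncomputable def sqfSymbPowZ (K : Type*) [Field K] (G : SimpleGraph V) (j : ℤ) :
    Ideal (MvPolynomial V K) :=
  if j ≤ 0 then ⊤ else sqfSymbPow K G j.toNat

/-- The graph `G ∖ s`: the induced subgraph on the vertices outside `s`, realized on
the same vertex set by deleting all edges meeting `s`. -/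
def delVerts (G : SimpleGraph V) (s : Finset V) : SimpleGraph V where
  Adj a b := G.Adj a b ∧ a ∉ s ∧ b ∉ s
  symm := ⟨fun _ _ ⟨h, ha, hb⟩ => ⟨h.symm, hb, ha⟩⟩
  loopless := ⟨fun a ⟨h, _, _⟩ => G.loopless.irrefl a h⟩

namespace MvPolynomial

variable {σ R : Type*} [CommSemiring R]

theorem colon_span_monomial_image (S : Set (σ →₀ ℕ)) (e : σ →₀ ℕ) :
    (Ideal.span ((fun a => monomial a (1 : R)) '' S)).colon {monomial e 1} =
      Ideal.span ((fun a => monomial a (1 : R)) '' ((· - e) '' S)) := by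
  ext f
  simp only [Submodule.mem_colon_singleton, smul_eq_mul, mem_ideal_span_monomial_image,
    Set.exists_mem_image]
  constructor
  · intro h yi hyi
    have hmem : yi + e ∈ (f * monomial e 1).support := by
      rwa [mem_support_iff, coeff_mul_monomial, mul_one, ← mem_support_iff]
    obtain ⟨a, ha, hle⟩ := h _ hmem
    exact ⟨a, ha, tsub_le_iff_right.2 hle⟩
  · intro h xi hxi
    rw [mem_support_iff, coeff_mul_monomial'] at hxi
    have hexi : e ≤ xi := by
      by_contra hne
      simp [hne] at hxi
    rw [if_pos hexi, mul_one, ← mem_support_iff] at hxi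
    obtain ⟨a, ha, hle⟩ := h _ hxi
    exact ⟨a, ha, by simpa [tsub_add_cancel_of_le hexi] using tsub_le_iff_right.1 hle⟩

noncomputable def finsetExponent (A : Finset σ) : σ →₀ ℕ := ∑ x ∈ A, Finsupp.single x 1

theorem finsetExponent_apply [DecidableEq σ] (A : Finset σ) (v : σ) :
    finsetExponent A v = if v ∈ A then 1 else 0 := by
  simp [finsetExponent, Finsupp.finsetSum_apply, Finsupp.single_apply]

theorem finsetExponent_sdiff [DecidableEq σ] (A s : Finset σ) :
    finsetExponent (A \ s) = finsetExponent A - finsetExponent s := by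
  ext v
  simp only [Finsupp.tsub_apply, finsetExponent_apply, Finset.mem_sdiff]
  split_ifs <;> simp_all

theorem prod_X_eq_monomial_finsetExponent (A : Finset σ) :
    (∏ x ∈ A, X x : MvPolynomial σ R) = monomial (finsetExponent A) 1 :=
  (monomial_sum_one A _).symm

theorem colon_span_prod_X_image [DecidableEq σ] (𝒜 : Set (Finset σ)) (s : Finset σ) :
    (Ideal.span ((fun A => ∏ x ∈ A, X x) '' 𝒜)).colon {∏ x ∈ s, (X x : MvPolynomial σ R)} =
      Ideal.span ((fun A => ∏ x ∈ A \ s, X x) '' 𝒜) := by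
  simp only [prod_X_eq_monomial_finsetExponent, finsetExponent_sdiff]
  rw [← Set.image_image (fun a => monomial a (1 : R)) finsetExponent,
    colon_span_monomial_image, Set.image_image, Set.image_image]

end MvPolynomial

section VertexCovers

variable {V : Type*} {G : SimpleGraph V} {s C : Finset V}

theorem exists_isMinVertexCover_subset (hC : IsVertexCover G C) :
    ∃ D ⊆ C, IsMinVertexCover G D := by
  obtain ⟨D, hDC, hD, hmin⟩ := exists_minimal_le_of_wellFoundedLT (IsVertexCover G) C hC
  exact ⟨D, hDC, hD, fun E hE hED => le_antisymm hED (hmin hE hED)⟩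

theorem isClique_of_simplicial {x₁ : V} (hs : ∀ z : V, z ∈ s ↔ z = x₁ ∨ G.Adj x₁ z)
    (hsimp : ∀ a b : V, G.Adj x₁ a → G.Adj x₁ b → a ≠ b → G.Adj a b) :
    G.IsClique (s : Set V) := by
  intro a ha b hb hab
  rcases (hs a).1 ha with rfl | ha' <;> rcases (hs b).1 hb with rfl | hb'
  exacts [(hab rfl).elim, hb', ha'.symm, hsimp a b ha' hb' hab]

variable [DecidableEq V]

theorem IsVertexCover.card_le_card_inter_add_one (hC : IsVertexCover G C)
    (hs : G.IsClique (s : Set V)) : s.card ≤ (s ∩ C).card + 1 := by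
  have hout : (s \ C).card ≤ 1 := by
    refine Finset.card_le_one.2 fun a ha b hb => ?_
    rw [Finset.mem_sdiff] at ha hb
    by_contra hab
    exact (hC (hs ha.1 hb.1 hab)).elim ha.2 hb.2
  have := Finset.card_inter_add_card_sdiff s C
  omega

theorem IsVertexCover.sdiff_delVerts (hC : IsVertexCover G C) :
    IsVertexCover (delVerts G s) (C \ s) := by
  rintro u w ⟨huw, hu, hw⟩
  have := hC huw
  simp only [Finset.mem_sdiff]
  tauto

theorem IsMinVertexCover.disjoint_delVerts (hC : IsMinVertexCover (delVerts G s) C) :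
    Disjoint C s := by
  have hsub : IsVertexCover (delVerts G s) (C \ s) := by
    rintro u w ⟨huw, hu, hw⟩
    have := hC.1 ⟨huw, hu, hw⟩
    simp only [Finset.mem_sdiff]
    tauto
  exact Finset.sdiff_eq_self_iff_disjoint.1 (hC.2 _ hsub Finset.sdiff_subset)

theorem IsVertexCover.union_erase_of_delVerts {x₁ : V} (hN : ∀ z, G.Adj x₁ z → z ∈ s)
    (hC : IsVertexCover (delVerts G s) C) : IsVertexCover G (C ∪ s.erase x₁) := by
  have key : ∀ {a b}, G.Adj a b → a ∉ s.erase x₁ → b ∉ s.erase x₁ → a ∉ s := by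
    intro a b hab ha hb has
    obtain rfl : a = x₁ := by simpa [has] using ha
    exact hb (Finset.mem_erase.2 ⟨hab.ne', hN b hab⟩)
  intro u w huw
  simp only [Finset.mem_union]
  by_cases hu : u ∈ s.erase x₁; · tauto
  by_cases hw : w ∈ s.erase x₁; · tauto
  have := hC ⟨huw, key huw hu hw, key huw.symm hw hu⟩
  tauto

def MeetsMinVertexCovers (G : SimpleGraph V) (k : ℕ) (A : Finset V) : Prop :=
  ∀ C : Finset V, IsMinVertexCover G C → k ≤ (A ∩ C).card

theorem MeetsMinVertexCovers.sdiff_delVerts {x₁ : V} {k : ℕ} {A : Finset V}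
    (hN : ∀ z, G.Adj x₁ z → z ∈ s) (hx₁ : x₁ ∈ s) (hA : MeetsMinVertexCovers G k A) :
    MeetsMinVertexCovers (delVerts G s) (k + 1 - s.card) (A \ s) := by
  intro C' hC'
  obtain ⟨C, hCsub, hC⟩ := exists_isMinVertexCover_subset (hC'.1.union_erase_of_delVerts hN)
  have hsub : A ∩ C ⊆ (A \ s) ∩ C' ∪ s.erase x₁ := by
    intro v hv
    rw [Finset.mem_inter] at hv
    rcases Finset.mem_union.1 (hCsub hv.2) with hvC' | hvs
    · have hvs : v ∉ s := Finset.disjoint_left.1 hC'.disjoint_delVerts hvC'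
      simp [hv.1, hvs, hvC']
    · exact Finset.mem_union_right _ hvs
  have hcard := (Finset.card_le_card hsub).trans (Finset.card_union_le _ _)
  have := Finset.card_erase_lt_of_mem hx₁
  have := hA C hC
  omega

theorem MeetsMinVertexCovers.union_of_delVerts {j : ℕ} {B : Finset V}
    (hs : G.IsClique (s : Set V)) (hB : MeetsMinVertexCovers (delVerts G s) j B) :
    MeetsMinVertexCovers G (j + s.card - 1) (B ∪ s) := by
  intro C hC
  obtain ⟨C', hC'sub, hC'⟩ := exists_isMinVertexCover_subset hC.1.sdiff_delVerts
  have hdisj : Disjoint (s ∩ C) (B ∩ C') :=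
    Finset.disjoint_sdiff.mono Finset.inter_subset_left (Finset.inter_subset_right.trans hC'sub)
  have hsub : (s ∩ C) ∪ (B ∩ C') ⊆ (B ∪ s) ∩ C :=
    Finset.union_subset (Finset.inter_subset_inter Finset.subset_union_right subset_rfl)
      (Finset.inter_subset_inter Finset.subset_union_left (hC'sub.trans Finset.sdiff_subset))
  have := Finset.card_le_card hsub
  rw [Finset.card_union_of_disjoint hdisj] at this
  have := hB C' hC'
  have := hC.1.card_le_card_inter_add_one hs
  omega

end VertexCovers

section SquarefreeSymbolicPowers

variable {V : Type*} [DecidableEq V] {G : SimpleGraph V} {s : Finset V} {k : ℕ}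

theorem sqfSymbPow_eq_span_image :
    sqfSymbPow K G k =
      Ideal.span ((fun A => ∏ x ∈ A, X x) '' {A | MeetsMinVertexCovers G k A}) := by
  unfold sqfSymbPow
  congr 1
  ext m
  exact ⟨fun ⟨A, hm, hA⟩ => ⟨A, hA, hm.symm⟩, fun ⟨A, hA, hm⟩ => ⟨A, hm.symm, hA⟩⟩

theorem span_prod_X_sdiff_eq_top (hs : G.IsClique (s : Set V)) (hk : k + 1 ≤ s.card) :
    Ideal.span ((fun A => ∏ x ∈ A \ s, (X x : MvPolynomial V K)) ''
      {A | MeetsMinVertexCovers G k A}) = ⊤ := by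
  rw [Ideal.eq_top_iff_one]
  refine Ideal.subset_span ⟨s, fun C hC => ?_, by simp⟩
  have := hC.1.card_le_card_inter_add_one hs
  omega

theorem span_prod_X_sdiff_eq_sqfSymbPow {x₁ : V} (hN : ∀ z, G.Adj x₁ z → z ∈ s) (hx₁ : x₁ ∈ s)
    (hs : G.IsClique (s : Set V)) (hk : s.card ≤ k) :
    Ideal.span ((fun A => ∏ x ∈ A \ s, (X x : MvPolynomial V K)) ''
      {A | MeetsMinVertexCovers G k A}) = sqfSymbPow K (delVerts G s) (k + 1 - s.card) := by
  rw [sqfSymbPow_eq_span_image]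
  apply le_antisymm <;> rw [Ideal.span_le] <;> rintro _ ⟨A, hA, rfl⟩
  · exact Ideal.subset_span ⟨A \ s, hA.sdiff_delVerts hN hx₁, rfl⟩
  · have hAs : MeetsMinVertexCovers G k (A ∪ s) := by
      have := hA.union_of_delVerts hs
      rwa [show k + 1 - s.card + s.card - 1 = k by omega] at this
    refine Ideal.mem_of_dvd _ (Finset.prod_dvd_prod_of_subset ((A ∪ s) \ s) A _ ?_)
      (Ideal.subset_span (Set.mem_image_of_mem _ hAs))
    simp [Finset.union_sdiff_right]

end SquarefreeSymbolicPowers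

theorem stmt9_general (G : SimpleGraph V) (x₁ : V) (s : Finset V)
    -- `s` is the closed neighborhood `N_G[x₁] = {x₁, x₂, …, x_d}`
    (hs : ∀ z : V, z ∈ s ↔ z = x₁ ∨ G.Adj x₁ z)
    -- `x₁` is a simplicial vertex
    (hsimp : ∀ a b : V, G.Adj x₁ a → G.Adj x₁ b → a ≠ b → G.Adj a b)
    (k : ℕ) :
    Submodule.colon (sqfSymbPow K G k)
        (Ideal.span {∏ v ∈ s, (X v : MvPolynomial V K)}) =
      sqfSymbPowZ K (delVerts G s) ((k : ℤ) - s.card + 1) := by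
  have hx₁ : x₁ ∈ s := (hs x₁).2 (Or.inl rfl)
  have hN : ∀ z, G.Adj x₁ z → z ∈ s := fun z hz => (hs z).2 (Or.inr hz)
  have hclique := isClique_of_simplicial hs hsimp
  rw [Ideal.colon_span, sqfSymbPow_eq_span_image, colon_span_prod_X_image, sqfSymbPowZ]
  split_ifs with hks
  · exact span_prod_X_sdiff_eq_top hclique (by omega)
  · rw [show ((k : ℤ) - s.card + 1).toNat = k + 1 - s.card by omega]
    exact span_prod_X_sdiff_eq_sqfSymbPow hN hx₁ hclique (by omega)

theorem stmt9 (G : SimpleGraph V) (x₁ : V) (s : Finset V)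
    -- `s` is the closed neighborhood `N_G[x₁] = {x₁, x₂, …, x_d}`
    (hs : ∀ z : V, z ∈ s ↔ z = x₁ ∨ G.Adj x₁ z)
    -- `x₁` is a simplicial vertex
    (hsimp : ∀ a b : V, G.Adj x₁ a → G.Adj x₁ b → a ≠ b → G.Adj a b)
    -- `d ≥ 2`, where `d = |N_G[x₁]|`
    (hd : 2 ≤ s.card)
    (k : ℕ) (hk : 1 ≤ k) :
    Submodule.colon (sqfSymbPow K G k)
        (Ideal.span {∏ v ∈ s, (X v : MvPolynomial V K)}) =
      sqfSymbPowZ K (delVerts G s) ((k : ℤ) - s.card + 1) :=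
  stmt9_general G x₁ s hs hsimp k
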